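/- (Lemma 5.) For all integers m ≥ 1 and n ≥ 1, the following identity holds in ℚ: Σ_{k=1}^{⌊n/(m+1)⌋} (1/k)·Σ_{d | gcd(n,k)} φ(d)·C((n − m·k)/d − 1, k/d − 1) = (1/n)·Σ_{d | n, d ≤ ⌊n/(m+1)⌋} φ(d)·( (m+1)·F^(m)_{n/d} − m·F^(m)_{n/d − 1} − 1 ). (Equivalently, each summand on the right may be written φ(d)·( F^(m)_{n/d} + m·F^(m)_{n/d − m − 1} − 1 ).) -/

import Mathlib

open Finset

/-- Two (0,1)-configurations on `ZMod n` are related if one is carried to the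
other by a rotation or a reflection. -/
def DihedralRel (n : ℕ) (c c' : ZMod n → Bool) : Prop :=
  (∃ t : ZMod n, (fun i => c (i + t)) = c') ∨ (∃ a : ZMod n, (fun i => c (a - i)) = c')

/-- The number of orbits of the dihedral action meeting the class `P`. -/
noncomputable def orbitCount (n : ℕ) (P : (ZMod n → Bool) → Prop) : ℕ :=
  Nat.card {q : Quot (DihedralRel n) // ∃ c, Quot.mk (DihedralRel n) c = q ∧ P c}

/-- The number of positions with value `true` in a configuration. -/
noncomputable def numOnes (n : ℕ) (c : ZMod n → Bool) : ℕ := Nat.card {i : ZMod n // c i = true}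

/-- A configuration is symmetric with respect to rotation if it has a nontrivial
rotational self-coincidence. -/
def RotSym (n : ℕ) (c : ZMod n → Bool) : Prop := ∃ t : ZMod n, t ≠ 0 ∧ ∀ i, c (i + t) = c i

/-- A configuration has a diameter of symmetry. -/
def DiamSym (n : ℕ) (c : ZMod n → Bool) : Prop := ∃ a : ZMod n, ∀ i, c (a - i) = c i

/-- A configuration has at least `m` 0's between any two adjacent 1's. -/
def Spaced (n m : ℕ) (c : ZMod n → Bool) : Prop :=
  ∀ i : ZMod n, c i = true → ∀ j : ℕ, 1 ≤ j → j ≤ m → c (i + (j : ZMod n)) = false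

/-- Gupta's expression `R(n,k)` from the Reis problem. -/
def ReisR (n k : ℕ) : ℚ :=
  (1/2) * ((Nat.choose ((n - k % 2) / 2) (k / 2) : ℚ) +
    (1/(k : ℚ)) * ∑ d ∈ (Nat.gcd n k).divisors,
      (Nat.totient d : ℚ) * (Nat.choose (n / d - 1) (k / d - 1) : ℚ))

/-- `m`-Fibonacci numbers of type 1. -/
def Fgen (m n : ℕ) : ℕ :=
  if _h : n ≤ m then 1 else Fgen m (n - 1) + Fgen m (n - m - 1)
termination_by n
decreasing_by all_goals omega

/-- `m`-Fibonacci numbers of type 2. -/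
def fgen (m n : ℕ) : ℕ :=
  if _h : n ≤ m then (if n ≤ (m - 1) / 2 then 1 else 2)
  else fgen m (n - 1) + fgen m (n - m - 1)
termination_by n
decreasing_by all_goals omega

/-! Grouping the terms by d ∣ gcd(n, k) and writing k = d j, N = n / d, the d-th group is
(φ(d) / d) Σ_j (1/j) C(N - m j - 1, j - 1). With a = N - m j, so that N = a + m j, the identity
j C(a, j) = a C(a - 1, j - 1) turns (1/j) C(a - 1, j - 1) into (1/N) (C(a, j) + m C(a - 1, j - 1)).
The closed form F_N = Σ_j C(N - m j, j) evaluates the two resulting sums as F_N - 1 and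
F_N - F_{N-1}. Divisors d > n / (m + 1) contribute nothing, since F is constant on [0, m]. -/

theorem Fgen_of_le {m n : ℕ} (h : n ≤ m) : Fgen m n = 1 := by
  rw [Fgen, dif_pos h]

theorem Fgen_of_lt {m n : ℕ} (h : m < n) : Fgen m n = Fgen m (n - 1) + Fgen m (n - m - 1) := by
  rw [Fgen, dif_neg (not_le.mpr h)]

theorem choose_sub_mul_eq_zero {m N j : ℕ} (h : N / (m + 1) < j) : (N - m * j).choose j = 0 := by
  have hN := (Nat.div_lt_iff_lt_mul (Nat.succ_pos m)).1 h
  rw [Nat.mul_succ, Nat.mul_comm] at hN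
  have hj : 0 < j := Nat.zero_lt_of_lt h
  exact Nat.choose_eq_zero_of_lt (by omega)

theorem choose_sub_mul_succ {m N : ℕ} (h : m < N) (i : ℕ) :
    (N - m * (i + 1)).choose (i + 1) =
      (N - 1 - m * (i + 1)).choose (i + 1) + (N - m - 1 - m * i).choose i := by
  have hshift : N - m - 1 - m * i = N - 1 - m * (i + 1) := by rw [Nat.mul_succ]; omega
  rw [hshift]
  rcases lt_or_ge (m * (i + 1)) N with hlt | hge
  · rw [show N - m * (i + 1) = N - 1 - m * (i + 1) + 1 by omega, Nat.choose_succ_succ', add_comm]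
  · obtain ⟨i, rfl⟩ : ∃ i', i = i' + 1 :=
      Nat.exists_eq_add_one.2 (Nat.pos_of_ne_zero (by rintro rfl; simp at hge; omega))
    simp [Nat.sub_eq_zero_of_le hge, Nat.sub_eq_zero_of_le (hge.trans' (Nat.sub_le N 1))]

theorem sub_sub_one_div (N m : ℕ) : (N - m - 1) / (m + 1) = N / (m + 1) - 1 := by
  rw [Nat.sub_sub, ← Nat.sub_mul_div N (m + 1) 1, Nat.mul_one]

theorem Fgen_eq_sum_range_choose (m N L : ℕ) (hL : N / (m + 1) < L) :
    Fgen m N = ∑ j ∈ range L, (N - m * j).choose j := by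
  induction N using Nat.strong_induction_on generalizing L with
  | _ N ih =>
  obtain ⟨L, rfl⟩ := Nat.exists_eq_add_one.2 (Nat.zero_lt_of_lt hL)
  rcases le_or_gt N m with hNm | hmN
  · have hK : N / (m + 1) = 0 := Nat.div_eq_of_lt (Nat.lt_succ_of_le hNm)
    rw [Fgen_of_le hNm, sum_range_succ', sum_eq_zero fun i _ => choose_sub_mul_eq_zero (by omega)]
    simp
  · have hK := sub_sub_one_div N m
    have hK1 : 1 ≤ N / (m + 1) := (Nat.le_div_iff_mul_le (Nat.succ_pos m)).2 (by omega)
    rw [Fgen_of_lt hmN, ih (N - 1) (by omega) (L + 1)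
      ((Nat.div_le_div_right (Nat.sub_le N 1)).trans_lt hL), ih (N - m - 1) (by omega) L (by omega),
      sum_range_succ' (fun j => (N - m * j).choose j),
      sum_range_succ' (fun j => (N - 1 - m * j).choose j),
      sum_congr rfl fun i _ => choose_sub_mul_succ hmN i, sum_add_distrib]
    simp only [Nat.choose_zero_right]
    ring

theorem sum_Icc_one_eq_sum_range {M : Type*} [AddCommMonoid M] (f : ℕ → M) (K : ℕ) :
    ∑ j ∈ Icc 1 K, f j = ∑ i ∈ range K, f (i + 1) := by
  rw [range_eq_Ico, sum_Ico_add' f 0 K 1, zero_add, Ico_add_one_right_eq_Icc]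

theorem Fgen_eq_one_add_sum_choose (m N : ℕ) :
    Fgen m N = 1 + ∑ j ∈ Icc 1 (N / (m + 1)), (N - m * j).choose j := by
  rw [Fgen_eq_sum_range_choose m N _ (Nat.lt_succ_self _), sum_range_succ',
    sum_Icc_one_eq_sum_range]
  simp [add_comm]

theorem Fgen_eq_sum_choose_add_Fgen_pred (m N : ℕ) :
    Fgen m N = ∑ j ∈ Icc 1 (N / (m + 1)), (N - m * j - 1).choose (j - 1) + Fgen m (N - 1) := by
  rcases le_or_gt N m with hNm | hmN
  · rw [Nat.div_eq_of_lt (Nat.lt_succ_of_le hNm), Fgen_of_le hNm, Fgen_of_le (by omega)]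
    simp
  · have hK1 : 1 ≤ N / (m + 1) := (Nat.le_div_iff_mul_le (Nat.succ_pos m)).2 (by omega)
    rw [Fgen_of_lt hmN, add_comm (Fgen m _), Fgen_eq_sum_range_choose m (N - m - 1) (N / (m + 1))
      (by rw [sub_sub_one_div]; exact Nat.sub_lt hK1 one_pos), sum_Icc_one_eq_sum_range]
    congr 1
    refine sum_congr rfl fun i _ => ?_
    rw [Nat.add_sub_cancel, Nat.mul_succ]
    congr 1
    omega

theorem mul_choose_sub_mul_pred {m N j : ℕ} (hj : 0 < j) (hjN : (m + 1) * j ≤ N) :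
    N * (N - m * j - 1).choose (j - 1) =
      j * ((N - m * j).choose j + m * (N - m * j - 1).choose (j - 1)) := by
  obtain ⟨i, rfl⟩ := Nat.exists_eq_add_one.2 hj
  obtain ⟨a, ha⟩ : ∃ a, N - m * (i + 1) = a + 1 :=
    Nat.exists_eq_add_one.2 (by rw [Nat.succ_mul] at hjN; omega)
  have hN : N = a + 1 + m * (i + 1) := by omega
  rw [ha, Nat.add_sub_cancel, Nat.add_sub_cancel, mul_add, mul_comm (i + 1),
    ← Nat.add_one_mul_choose_eq, hN]
  ring

theorem sum_inv_mul_choose_eq_Fgen (m N : ℕ) :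
    ∑ j ∈ Icc 1 (N / (m + 1)), (1 / (j : ℚ)) * ((N - m * j - 1).choose (j - 1) : ℚ) =
      (1 / (N : ℚ)) * ((m + 1) * (Fgen m N : ℚ) - m * (Fgen m (N - 1) : ℚ) - 1) := by
  rcases Nat.eq_zero_or_pos N with rfl | hN
  · simp
  have hterm : ∀ j ∈ Icc 1 (N / (m + 1)),
      (1 / (j : ℚ)) * ((N - m * j - 1).choose (j - 1) : ℚ) =
        (1 / (N : ℚ)) * ((N - m * j).choose j + m * (N - m * j - 1).choose (j - 1)) := by
    intro j hj
    rw [mem_Icc, Nat.le_div_iff_mul_le (Nat.succ_pos m), mul_comm] at hj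
    have key : (N * (N - m * j - 1).choose (j - 1) : ℚ) =
        j * ((N - m * j).choose j + m * (N - m * j - 1).choose (j - 1)) := by
      exact_mod_cast mul_choose_sub_mul_pred hj.1 hj.2
    have hj0 : (j : ℚ) ≠ 0 := Nat.cast_ne_zero.2 (by omega)
    have hN0 : (N : ℚ) ≠ 0 := Nat.cast_ne_zero.2 (by omega)
    field_simp
    linear_combination key
  have hA := congrArg (Nat.cast : ℕ → ℚ) (Fgen_eq_one_add_sum_choose m N)
  have hB := congrArg (Nat.cast : ℕ → ℚ) (Fgen_eq_sum_choose_add_Fgen_pred m N)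
  push_cast at hA hB
  rw [sum_congr rfl hterm, ← mul_sum, sum_add_distrib, ← mul_sum]
  congr 1
  linear_combination -hA - (m : ℚ) * hB

theorem sum_Icc_filter_dvd {M : Type*} [AddCommMonoid M] (f : ℕ → M) {d : ℕ} (hd : 0 < d)
    (K : ℕ) : ∑ k ∈ Icc 1 K with d ∣ k, f k = ∑ j ∈ Icc 1 (K / d), f (d * j) := by
  have hmul : {k ∈ Icc 1 K | d ∣ k} =
      (Icc 1 (K / d)).map ⟨(d * ·), mul_right_injective₀ hd.ne'⟩ := by
    ext k
    simp only [mem_filter, mem_Icc, mem_map, Function.Embedding.coeFn_mk, Nat.le_div_iff_mul_le hd]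
    constructor
    · rintro ⟨⟨hk, hkK⟩, j, rfl⟩
      exact ⟨j, ⟨Nat.pos_of_mul_pos_left hk, by rwa [mul_comm]⟩, rfl⟩
    · rintro ⟨j, ⟨hj, hjK⟩, rfl⟩
      exact ⟨⟨Nat.mul_pos hd hj, by rwa [mul_comm]⟩, dvd_mul_right d j⟩
  rw [hmul, sum_map]
  rfl

theorem sum_Icc_sum_divisors_gcd {M : Type*} [AddCommMonoid M] {n K : ℕ} (hK : K ≤ n)
    (f : ℕ → ℕ → M) :
    ∑ k ∈ Icc 1 K, ∑ d ∈ (n.gcd k).divisors, f k d =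
      ∑ d ∈ n.divisors, ∑ k ∈ Icc 1 K with d ∣ k, f k d := by
  refine sum_comm' fun k d => ?_
  simp only [mem_Icc, mem_filter, Nat.mem_divisors, Nat.dvd_gcd_iff, ne_eq, Nat.gcd_eq_zero_iff]
  omega

theorem sum_multiples_inv_mul_choose_eq_Fgen (m : ℕ) {n d : ℕ} (hd : 0 < d) (hdn : d ∣ n)
    (c : ℚ) :
    ∑ k ∈ Icc 1 (n / (m + 1)) with d ∣ k,
        (1 / (k : ℚ)) * (c * ((n - m * k) / d - 1).choose (k / d - 1)) =
      (1 / (n : ℚ)) *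
        (c * ((m + 1) * (Fgen m (n / d) : ℚ) - m * (Fgen m (n / d - 1) : ℚ) - 1)) := by
  obtain ⟨N, rfl⟩ := hdn
  rw [sum_Icc_filter_dvd _ hd, Nat.div_div_eq_div_mul, mul_comm _ d, Nat.mul_div_mul_left _ _ hd,
    Nat.mul_div_cancel_left _ hd]
  calc _ = (c / d) * ∑ j ∈ Icc 1 (N / (m + 1)),
        (1 / (j : ℚ)) * ((N - m * j - 1).choose (j - 1) : ℚ) := by
        rw [mul_sum]
        refine sum_congr rfl fun j _ => ?_
        rw [mul_left_comm m, ← Nat.mul_sub, Nat.mul_div_cancel_left _ hd,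
          Nat.mul_div_cancel_left _ hd]
        push_cast
        ring
    _ = _ := by
        rw [sum_inv_mul_choose_eq_Fgen]
        push_cast
        ring

theorem Fgen_combination_eq_zero_of_le {m N : ℕ} (h : N ≤ m) :
    (m + 1) * (Fgen m N : ℚ) - m * (Fgen m (N - 1) : ℚ) - 1 = 0 := by
  rw [Fgen_of_le h, Fgen_of_le (by omega)]
  push_cast
  ring

theorem lemma5_general (m n : ℕ) :
    (∑ k ∈ Finset.Icc 1 (n / (m + 1)), (1 / (k : ℚ)) *
        ∑ d ∈ (Nat.gcd n k).divisors,
          (Nat.totient d : ℚ) * (Nat.choose ((n - m * k) / d - 1) (k / d - 1) : ℚ)) =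
      (1 / (n : ℚ)) * ∑ d ∈ n.divisors.filter (fun d => d ≤ n / (m + 1)),
        (Nat.totient d : ℚ) *
          ((m + 1) * (Fgen m (n / d) : ℚ) - m * (Fgen m (n / d - 1) : ℚ) - 1) := by
  simp_rw [mul_sum]
  rw [sum_Icc_sum_divisors_gcd (Nat.div_le_self n (m + 1)), sum_congr rfl fun d hd =>
    sum_multiples_inv_mul_choose_eq_Fgen m (Nat.pos_of_mem_divisors hd)
      (Nat.dvd_of_mem_divisors hd) _]
  refine (sum_filter_of_ne fun d hd hne => not_lt.1 fun hlt => hne ?_).symm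
  have hd : 0 < d := Nat.pos_of_mem_divisors hd
  have hnd : n / d ≤ m := Nat.lt_succ_iff.1 <| (Nat.div_lt_iff_lt_mul hd).2 <| by
    rw [mul_comm]; exact (Nat.div_lt_iff_lt_mul (Nat.succ_pos m)).1 hlt
  rw [Fgen_combination_eq_zero_of_le hnd, mul_zero, mul_zero]

/-- Lemma 5. -/
theorem lemma5 (m n : ℕ) (hm : 1 ≤ m) (hn : 1 ≤ n) :
    (∑ k ∈ Finset.Icc 1 (n / (m + 1)), (1 / (k : ℚ)) *
        ∑ d ∈ (Nat.gcd n k).divisors,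
          (Nat.totient d : ℚ) * (Nat.choose ((n - m * k) / d - 1) (k / d - 1) : ℚ)) =
      (1 / (n : ℚ)) * ∑ d ∈ n.divisors.filter (fun d => d ≤ n / (m + 1)),
        (Nat.totient d : ℚ) *
          ((m + 1) * (Fgen m (n / d) : ℚ) - m * (Fgen m (n / d - 1) : ℚ) - 1) :=
  lemma5_general m n
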